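/- Let Δ = 3 and let Π̂ be a node-edge-checkable problem that is a fixed point (Q(Π̂) = Π̂) and a relaxation of the sinkless-and-sourceless orientation problem Π. Then there exist labels a, d, e ∈ Σ_Π̂ such that {a,d,e} ∈ N_Π̂ and all of the 2-multisets {d,d}, {d,e}, {e,e}, {a,e}, {a,d} belong to E_Π̂. Consequently, Π̂ can be solved in zero rounds given any sinkless orientation of the input graph. -/

import Mathlib

set_option autoImplicit false

/-- A node-edge-checkable problem with (node) degree `Δ`: a set of node
configurations (cardinality-`Δ` multisets of labels) and a set of edge
configurations (cardinality-`2` multisets of labels). -/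
structure NEProblem (Δ : ℕ) (Λ : Type) where
  nodeC : Set (Multiset Λ)
  edgeC : Set (Multiset Λ)
  node_card : ∀ m ∈ nodeC, Multiset.card m = Δ
  edge_card : ∀ m ∈ edgeC, Multiset.card m = 2

/-- Nonempty subsets of `Λ`: the labels of `R*(P)`, `R(P)`, `R̄(P)`. -/
abbrev SubS (Λ : Type) : Type := {S : Set Λ // S.Nonempty}

variable {Δ : ℕ} {Λ Λ' Λ'' ΛP ΛI ΛF : Type}

/-- `f` is a port-local relaxation function from `P` to `P'`. -/
def IsPortLocalRelax (P : NEProblem Δ Λ) (P' : NEProblem Δ Λ') (f : Λ → Λ') : Prop :=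
  (∀ m ∈ P.nodeC, m.map f ∈ P'.nodeC) ∧ (∀ m ∈ P.edgeC, m.map f ∈ P'.edgeC)

/-- An occurrence-based relaxation witness from `P` to `P'`: for each node
configuration `C` of `P`, `p C` is a multiset of pairs matching each occurrence
of a label in `C` with its image label, such that node configurations are mapped
into node configurations of `P'`, and any two occurrences forming an edge
configuration of `P` are mapped to an edge configuration of `P'`. -/
def IsRelaxWitness (P : NEProblem Δ Λ) (P' : NEProblem Δ Λ')
    (p : Multiset Λ → Multiset (Λ × Λ')) : Prop :=
  (∀ C ∈ P.nodeC, (p C).map Prod.fst = C) ∧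
  (∀ C ∈ P.nodeC, (p C).map Prod.snd ∈ P'.nodeC) ∧
  (∀ C ∈ P.nodeC, ∀ C' ∈ P.nodeC, ∀ q ∈ p C, ∀ q' ∈ p C',
    ({q.1, q'.1} : Multiset Λ) ∈ P.edgeC → ({q.2, q'.2} : Multiset Λ') ∈ P'.edgeC)

/-- `P →0 P'` : `P'` is a relaxation of `P` (occurrence-based sense). -/
def Relaxes (P : NEProblem Δ Λ) (P' : NEProblem Δ Λ') : Prop :=
  ∃ p, IsRelaxWitness P P' p

/-- An edge-based relaxation witness from `P` to `P'` (dual of `IsRelaxWitness`). -/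
def IsEdgeRelaxWitness (P : NEProblem Δ Λ) (P' : NEProblem Δ Λ')
    (p : Multiset Λ → Multiset (Λ × Λ')) : Prop :=
  (∀ C ∈ P.edgeC, (p C).map Prod.fst = C) ∧
  (∀ C ∈ P.edgeC, (p C).map Prod.snd ∈ P'.edgeC) ∧
  (∀ s : Multiset (Λ × Λ'), (∀ q ∈ s, ∃ C ∈ P.edgeC, q ∈ p C) →
    s.map Prod.fst ∈ P.nodeC → s.map Prod.snd ∈ P'.nodeC)

/-- `P'` is an edge-based relaxation of `P`. -/
def EdgeRelaxes (P : NEProblem Δ Λ) (P' : NEProblem Δ Λ') : Prop :=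
  ∃ p, IsEdgeRelaxWitness P P' p

/-- The problem `R*(P)`: labels are nonempty subsets of the labels of `P`;
a node configuration is any `Δ`-multiset of sets admitting a selection forming
a node configuration of `P`; an edge configuration is any pair of sets all of
whose selections form edge configurations of `P`. -/
def RStar (P : NEProblem Δ Λ) : NEProblem Δ (SubS Λ) where
  nodeC := {m | Multiset.card m = Δ ∧ ∃ p : Multiset (SubS Λ × Λ),
    p.map Prod.fst = m ∧ (∀ q ∈ p, q.2 ∈ q.1.val) ∧ p.map Prod.snd ∈ P.nodeC}
  edgeC := {m | ∃ S₁ S₂ : SubS Λ, m = {S₁, S₂} ∧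
    ∀ L₁ ∈ S₁.val, ∀ L₂ ∈ S₂.val, ({L₁, L₂} : Multiset Λ) ∈ P.edgeC}
  node_card := fun _ hm => hm.1
  edge_card := by rintro m ⟨S₁, S₂, rfl, -⟩; rfl

/-- The product `P × P'` of two node-edge-checkable problems. -/
def prodP (P : NEProblem Δ Λ) (P' : NEProblem Δ Λ') : NEProblem Δ (Λ × Λ') where
  nodeC := {m | m.map Prod.fst ∈ P.nodeC ∧ m.map Prod.snd ∈ P'.nodeC}
  edgeC := {m | m.map Prod.fst ∈ P.edgeC ∧ m.map Prod.snd ∈ P'.edgeC}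
  node_card := fun m hm => by have := P.node_card _ hm.1; simpa using this
  edge_card := fun m hm => by have := P.edge_card _ hm.1; simpa using this

/-- The tripotent input `τ_P(Pi)`: labels are functions from the labels of `Pi`
to the labels of `R*(P)`; a multiset of functions is a node (resp. edge)
configuration iff applying it (in any matching) to every node (resp. edge)
configuration of `Pi` yields a node (resp. edge) configuration of `R*(P)`. -/
def tau (P : NEProblem Δ ΛP) (Pi : NEProblem Δ Λ) : NEProblem Δ (Λ → SubS ΛP) where
  nodeC := {m | Multiset.card m = Δ ∧ ∀ C ∈ Pi.nodeC,
    ∀ p : Multiset ((Λ → SubS ΛP) × Λ), p.map Prod.fst = m → p.map Prod.snd = C →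
      p.map (fun q => q.1 q.2) ∈ (RStar P).nodeC}
  edgeC := {m | Multiset.card m = 2 ∧ ∀ C ∈ Pi.edgeC,
    ∀ p : Multiset ((Λ → SubS ΛP) × Λ), p.map Prod.fst = m → p.map Prod.snd = C →
      p.map (fun q => q.1 q.2) ∈ (RStar P).edgeC}
  node_card := fun _ hm => hm.1
  edge_card := fun _ hm => hm.1

/-- A pair `{S₁, S₂}` of nonempty sets of labels satisfies the universal
quantifier w.r.t. the edge constraint of `P`. -/
def univEdge (P : NEProblem Δ Λ) (m : Multiset (SubS Λ)) : Prop :=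
  ∃ S₁ S₂ : SubS Λ, m = {S₁, S₂} ∧
    ∀ L₁ ∈ S₁.val, ∀ L₂ ∈ S₂.val, ({L₁, L₂} : Multiset Λ) ∈ P.edgeC

/-- A `Δ`-multiset of nonempty sets of labels satisfies the universal quantifier
w.r.t. the node constraint of `P`. -/
def univNode (P : NEProblem Δ Λ) (m : Multiset (SubS Λ)) : Prop :=
  Multiset.card m = Δ ∧ ∀ p : Multiset (SubS Λ × Λ),
    p.map Prod.fst = m → (∀ q ∈ p, q.2 ∈ q.1.val) → p.map Prod.snd ∈ P.nodeC

/-- `m'` strictly dominates `m` (coordinatewise inclusion up to permutation,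
strict in at least one coordinate). -/
def strictlyDominates (m' m : Multiset (SubS Λ)) : Prop :=
  ∃ p : Multiset (SubS Λ × SubS Λ), p.map Prod.fst = m' ∧ p.map Prod.snd = m ∧
    (∀ q ∈ p, q.2.val ⊆ q.1.val) ∧ ∃ q ∈ p, q.2.val ⊂ q.1.val

/-- The edge constraint of `R(P)`: maximal universally-satisfying pairs. -/
def REedge (P : NEProblem Δ Λ) : Set (Multiset (SubS Λ)) :=
  {m | univEdge P m ∧ ∀ m', univEdge P m' → ¬ strictlyDominates m' m}

/-- The problem `R(P)`. -/
def RE (P : NEProblem Δ Λ) : NEProblem Δ (SubS Λ) where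
  nodeC := {m | Multiset.card m = Δ ∧ (∀ S ∈ m, ∃ e ∈ REedge P, S ∈ e) ∧
    ∃ p : Multiset (SubS Λ × Λ), p.map Prod.fst = m ∧ (∀ q ∈ p, q.2 ∈ q.1.val) ∧
      p.map Prod.snd ∈ P.nodeC}
  edgeC := REedge P
  node_card := fun _ hm => hm.1
  edge_card := by rintro m ⟨⟨S₁, S₂, rfl, -⟩, -⟩; rfl

/-- The node constraint of `R̄(P)`: maximal universally-satisfying `Δ`-multisets. -/
def REbarNode (P : NEProblem Δ Λ) : Set (Multiset (SubS Λ)) :=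
  {m | univNode P m ∧ ∀ m', univNode P m' → ¬ strictlyDominates m' m}

/-- The problem `R̄(P)` (dual of `R(P)`). -/
def REbar (P : NEProblem Δ Λ) : NEProblem Δ (SubS Λ) where
  nodeC := REbarNode P
  edgeC := {m | ∃ S₁ S₂ : SubS Λ, m = {S₁, S₂} ∧
    (∃ e ∈ REbarNode P, S₁ ∈ e) ∧ (∃ e ∈ REbarNode P, S₂ ∈ e) ∧
    ∃ L₁ ∈ S₁.val, ∃ L₂ ∈ S₂.val, ({L₁, L₂} : Multiset Λ) ∈ P.edgeC}
  node_card := fun _ hm => hm.1.1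
  edge_card := by rintro m ⟨S₁, S₂, rfl, -⟩; rfl

/-- One step of round elimination: `Q = R̄ ∘ R`. -/
def Qop (P : NEProblem Δ Λ) : NEProblem Δ (SubS (SubS Λ)) := REbar (RE P)

/-- Label type of `Q^i(P)`. -/
def QIterType (Λ : Type) : ℕ → Type
  | 0 => Λ
  | i + 1 => SubS (SubS (QIterType Λ i))

/-- `Q^i(P)`. -/
def QIter (P : NEProblem Δ Λ) : (i : ℕ) → NEProblem Δ (QIterType Λ i)
  | 0 => P
  | i + 1 => Qop (QIter P i)

/-- Labels of `P` occurring in some configuration of `P`. -/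
def usedLabels (P : NEProblem Δ Λ) : Set Λ :=
  {L | (∃ C ∈ P.nodeC, L ∈ C) ∨ (∃ C ∈ P.edgeC, L ∈ C)}

/-- `P'` arises from `P` by a bijective renaming of (used) labels. -/
def EquivUpToRenaming (P : NEProblem Δ Λ) (P' : NEProblem Δ Λ') : Prop :=
  ∃ f : Λ → Λ', Set.InjOn f (usedLabels P) ∧
    P'.nodeC = (fun m => m.map f) '' P.nodeC ∧
    P'.edgeC = (fun m => m.map f) '' P.edgeC

/-- The trivial one-label problem. -/
def trivProblem (Δ : ℕ) : NEProblem Δ Unit where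
  nodeC := {Multiset.replicate Δ ()}
  edgeC := {Multiset.replicate 2 ()}
  node_card := by intro m hm; rw [Set.mem_singleton_iff] at hm; subst hm; simp
  edge_card := by intro m hm; rw [Set.mem_singleton_iff] at hm; subst hm; simp

/-- Labels of the sinkless-and-sourceless orientation problem. -/
inductive SSOLabel : Type
  | B | C
deriving DecidableEq

/-- The sinkless-and-sourceless orientation problem (Δ = 3). -/
def SSO : NEProblem 3 SSOLabel where
  nodeC := {m | Multiset.card m = 3 ∧ SSOLabel.B ∈ m ∧ SSOLabel.C ∈ m}
  edgeC := {({SSOLabel.B, SSOLabel.C} : Multiset SSOLabel)}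
  node_card := fun _ h => h.1
  edge_card := by intro m hm; rw [Set.mem_singleton_iff] at hm; subst hm; rfl

/-!
Call a choice of labels for `B, C, A_i, D_i` satisfying the constraints of `Q^k(Π)` an image of
`Q^k(Π)` (`QPattern`, with `k = n + 1`). A relaxation of sinkless-and-sourceless orientation
gives an image of `Q¹(Π)` in `Q(Π̂)`; an image of `Q^k(Π)` in `Π̂` gives, through maximal
configurations of `R(Π̂)` and of `R̄(R(Π̂))`, an image of `Q^{k+1}(Π)` in `Q(Π̂)`; and the
relaxation `Q(Π̂) → Π̂` carries images into `Π̂`. So `Π̂` contains an image of every `Q^k(Π)`.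
Once `k > |Σ_Π̂| + 1`, two images `d i`, `d j` (`i < j`) of `D_{i+1}`, `D_{j+1}` coincide, and
`a i`, `d i`, `e i` are the required labels: `{a i, d i} = {a i, d j}` is an edge because
`A_{i+1} ~ D_{j+1}`.
-/

namespace Multiset

variable {α β : Type*}

lemma exists_cons_of_map_eq_cons {f : α → β} {s : Multiset α} {b : β} {t : Multiset β}
    (h : s.map f = b ::ₘ t) : ∃ a s', s = a ::ₘ s' ∧ f a = b ∧ s'.map f = t := by
  obtain ⟨a, ha, rfl⟩ := mem_map.1 (h ▸ mem_cons_self b t)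
  obtain ⟨s', rfl⟩ := exists_cons_of_mem ha
  rw [map_cons] at h
  exact ⟨a, s', rfl, rfl, (cons_inj_right _).1 h⟩

lemma exists_pair_of_map_eq_pair {f : α → β} {s : Multiset α} {x y : β}
    (h : s.map f = {x, y}) : ∃ a b, s = {a, b} ∧ f a = x ∧ f b = y := by
  obtain ⟨a, s', rfl, rfl, hs'⟩ := exists_cons_of_map_eq_cons h
  obtain ⟨b, rfl, rfl⟩ := map_eq_singleton.1 hs'
  exact ⟨a, b, rfl, rfl, rfl⟩

lemma exists_triple_of_map_eq_triple {f : α → β} {s : Multiset α} {x y z : β}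
    (h : s.map f = {x, y, z}) : ∃ a b c, s = {a, b, c} ∧ f a = x ∧ f b = y ∧ f c = z := by
  obtain ⟨a, s', rfl, rfl, hs'⟩ := exists_cons_of_map_eq_cons h
  obtain ⟨b, c, rfl, rfl, rfl⟩ := exists_pair_of_map_eq_pair hs'
  exact ⟨a, b, c, rfl, rfl, rfl, rfl⟩

end Multiset

section Maximal

variable {Λ : Type}

lemma exists_not_strictlyDominated {α : Type} [PartialOrder α] [Finite α]
    (toMs : α → Multiset (SubS Λ)) (good : Multiset (SubS Λ) → Prop)
    (hdom : ∀ t m', strictlyDominates m' (toMs t) → ∃ t', m' = toMs t' ∧ t < t')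
    {t₀ : α} (h₀ : good (toMs t₀)) :
    ∃ t, t₀ ≤ t ∧ good (toMs t) ∧ ∀ m', good m' → ¬ strictlyDominates m' (toMs t) := by
  obtain ⟨t, hle, hmax⟩ := (Set.toFinite {t | good (toMs t)}).exists_le_maximal h₀
  refine ⟨t, hle, hmax.prop, fun m' hm' hdm => ?_⟩
  obtain ⟨t', rfl, hlt⟩ := hdom t m' hdm
  exact hlt.not_ge (hmax.2 hm' hlt.le)

lemma exists_lt_of_strictlyDominates_pair {t : SubS Λ × SubS Λ} {m' : Multiset (SubS Λ)}
    (h : strictlyDominates m' {t.1, t.2}) :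
    ∃ t' : SubS Λ × SubS Λ, m' = {t'.1, t'.2} ∧ t < t' := by
  obtain ⟨p, rfl, hp, hle, q, hq, hlt⟩ := h
  obtain ⟨qX, qY, rfl, hX, hY⟩ := Multiset.exists_pair_of_map_eq_pair hp
  obtain ⟨X, Y⟩ := t
  subst hX hY
  refine ⟨(qX.1, qY.1), by simp, Prod.lt_iff.2 ?_⟩
  simp only [Multiset.insert_eq_cons, Multiset.mem_cons, Multiset.mem_singleton] at hq hle
  rcases hq with rfl | rfl
  · exact Or.inl ⟨hlt, hle _ (Or.inr rfl)⟩
  · exact Or.inr ⟨hle _ (Or.inl rfl), hlt⟩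

lemma exists_lt_of_strictlyDominates_triple {t : SubS Λ × SubS Λ × SubS Λ}
    {m' : Multiset (SubS Λ)} (h : strictlyDominates m' {t.1, t.2.1, t.2.2}) :
    ∃ t' : SubS Λ × SubS Λ × SubS Λ, m' = {t'.1, t'.2.1, t'.2.2} ∧ t < t' := by
  obtain ⟨p, rfl, hp, hle, q, hq, hlt⟩ := h
  obtain ⟨qX, qY, qZ, rfl, hX, hY, hZ⟩ := Multiset.exists_triple_of_map_eq_triple hp
  obtain ⟨X, Y, Z⟩ := t
  subst hX hY hZ
  refine ⟨(qX.1, qY.1, qZ.1), by simp, ?_⟩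
  simp only [Multiset.insert_eq_cons, Multiset.mem_cons, Multiset.mem_singleton] at hq hle
  simp only [Prod.lt_iff]
  rcases hq with rfl | rfl | rfl
  · exact Or.inl ⟨hlt, hle _ (Or.inr (Or.inl rfl)), hle _ (Or.inr (Or.inr rfl))⟩
  · exact Or.inr ⟨hle _ (Or.inl rfl), Or.inl ⟨hlt, hle _ (Or.inr (Or.inr rfl))⟩⟩
  · exact Or.inr ⟨hle _ (Or.inl rfl), Or.inr ⟨hle _ (Or.inr (Or.inl rfl)), hlt⟩⟩

variable [Finite Λ]

lemma exists_REedge_le {Δ : ℕ} (P : NEProblem Δ Λ) {X Y : SubS Λ}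
    (h : ∀ x ∈ X.1, ∀ y ∈ Y.1, ({x, y} : Multiset Λ) ∈ P.edgeC) :
    ∃ X' Y', ({X', Y'} : Multiset (SubS Λ)) ∈ REedge P ∧ X ≤ X' ∧ Y ≤ Y' := by
  obtain ⟨⟨X', Y'⟩, ⟨hX, hY⟩, hgood, hmax⟩ :=
    exists_not_strictlyDominated (fun t : SubS Λ × SubS Λ => {t.1, t.2}) (univEdge P)
      (fun _ _ hd => exists_lt_of_strictlyDominates_pair hd) (t₀ := (X, Y)) ⟨X, Y, rfl, h⟩
  exact ⟨X', Y', ⟨hgood, hmax⟩, hX, hY⟩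

lemma exists_REbarNode_le (P : NEProblem 3 Λ) {X Y Z : SubS Λ}
    (h : ∀ x ∈ X.1, ∀ y ∈ Y.1, ∀ z ∈ Z.1, ({x, y, z} : Multiset Λ) ∈ P.nodeC) :
    ∃ X' Y' Z', ({X', Y', Z'} : Multiset (SubS Λ)) ∈ REbarNode P ∧
      X ≤ X' ∧ Y ≤ Y' ∧ Z ≤ Z' := by
  have h₀ : univNode P {X, Y, Z} := by
    refine ⟨rfl, fun p hp hsel => ?_⟩
    obtain ⟨qX, qY, qZ, rfl, rfl, rfl, rfl⟩ := Multiset.exists_triple_of_map_eq_triple hp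
    simpa using h _ (hsel qX (by simp)) _ (hsel qY (by simp)) _ (hsel qZ (by simp))
  obtain ⟨⟨X', Y', Z'⟩, ⟨hX, hY, hZ⟩, hgood, hmax⟩ :=
    exists_not_strictlyDominated (fun t : SubS Λ × SubS Λ × SubS Λ => {t.1, t.2.1, t.2.2})
      (univNode P) (fun _ _ hd => exists_lt_of_strictlyDominates_triple hd) (t₀ := (X, Y, Z)) h₀
  exact ⟨X', Y', Z', ⟨hgood, hmax⟩, hX, hY, hZ⟩

end Maximal

section RoundElimination

variable {Λ : Type}

def Occurs {α : Type} (s : Set (Multiset α)) (x : α) : Prop := ∃ m ∈ s, x ∈ m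

lemma Occurs.of_pair_left {α : Type} {s : Set (Multiset α)} {x y : α} (h : {x, y} ∈ s) :
    Occurs s x := ⟨_, h, by simp⟩

lemma Occurs.of_pair_right {α : Type} {s : Set (Multiset α)} {x y : α} (h : {x, y} ∈ s) :
    Occurs s y := ⟨_, h, by simp⟩

lemma mem_RE_nodeC {P : NEProblem 3 Λ} {X Y Z : SubS Λ} {x y z : Λ}
    (hX : Occurs (REedge P) X) (hY : Occurs (REedge P) Y) (hZ : Occurs (REedge P) Z)
    (hx : x ∈ X.1) (hy : y ∈ Y.1) (hz : z ∈ Z.1) (h : ({x, y, z} : Multiset Λ) ∈ P.nodeC) :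
    ({X, Y, Z} : Multiset (SubS Λ)) ∈ (RE P).nodeC := by
  refine ⟨rfl, ?_, {(X, x), (Y, y), (Z, z)}, by simp, ?_, by simpa using h⟩
  · simp only [Multiset.insert_eq_cons, Multiset.mem_cons, Multiset.mem_singleton]
    rintro S (rfl | rfl | rfl) <;> assumption
  · simp only [Multiset.insert_eq_cons, Multiset.mem_cons, Multiset.mem_singleton]
    rintro q (rfl | rfl | rfl) <;> assumption

lemma mem_Qop_edgeC {Δ : ℕ} {P : NEProblem Δ Λ} {S₁ S₂ : SubS (SubS Λ)} {L₁ L₂ : SubS Λ}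
    (h₁ : Occurs (REbarNode (RE P)) S₁) (h₂ : Occurs (REbarNode (RE P)) S₂)
    (hL₁ : L₁ ∈ S₁.1) (hL₂ : L₂ ∈ S₂.1) (h : ({L₁, L₂} : Multiset (SubS Λ)) ∈ REedge P) :
    ({S₁, S₂} : Multiset (SubS (SubS Λ))) ∈ (Qop P).edgeC :=
  ⟨S₁, S₂, rfl, h₁, h₂, L₁, hL₁, L₂, hL₂, h⟩

lemma forall_mem_Qop_edgeC {Δ : ℕ} {P : NEProblem Δ Λ} {S T : Set (SubS (SubS Λ))}
    {L₁ L₂ : SubS Λ} (hS : ∀ X ∈ S, L₁ ∈ X.1 ∧ Occurs (REbarNode (RE P)) X)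
    (hT : ∀ Y ∈ T, L₂ ∈ Y.1 ∧ Occurs (REbarNode (RE P)) Y)
    (h : ({L₁, L₂} : Multiset (SubS Λ)) ∈ REedge P) :
    ∀ X ∈ S, ∀ Y ∈ T, ({X, Y} : Multiset (SubS (SubS Λ))) ∈ (Qop P).edgeC :=
  fun X hX Y hY => mem_Qop_edgeC (hS X hX).2 (hT Y hY).2 (hS X hX).1 (hT Y hY).1 h

end RoundElimination

section Relaxation

variable {Λ Λ' : Type} {p : Multiset Λ → Multiset (Λ × Λ')}

def IsRelaxImage {Δ : ℕ} (P : NEProblem Δ Λ) (p : Multiset Λ → Multiset (Λ × Λ')) (x : Λ)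
    (x' : Λ') : Prop :=
  ∃ C ∈ P.nodeC, (x, x') ∈ p C

lemma IsRelaxWitness.edge_mem {Δ : ℕ} {P : NEProblem Δ Λ} {P' : NEProblem Δ Λ'}
    (hp : IsRelaxWitness P P' p) {x y : Λ} {x' y' : Λ'}
    (hx : IsRelaxImage P p x x') (hy : IsRelaxImage P p y y')
    (h : ({x, y} : Multiset Λ) ∈ P.edgeC) : ({x', y'} : Multiset Λ') ∈ P'.edgeC := by
  obtain ⟨C, hC, hxC⟩ := hx
  obtain ⟨D, hD, hyD⟩ := hy
  exact hp.2.2 C hC D hD _ hxC _ hyD h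

lemma IsRelaxWitness.exists_node_image {P : NEProblem 3 Λ} {P' : NEProblem 3 Λ'}
    (hp : IsRelaxWitness P P' p) {x y z : Λ} (h : ({x, y, z} : Multiset Λ) ∈ P.nodeC) :
    ∃ x' y' z', ({x', y', z'} : Multiset Λ') ∈ P'.nodeC ∧
      IsRelaxImage P p x x' ∧ IsRelaxImage P p y y' ∧ IsRelaxImage P p z z' := by
  obtain ⟨qx, qy, qz, hpC, rfl, rfl, rfl⟩ := Multiset.exists_triple_of_map_eq_triple (hp.1 _ h)
  have himage : ∀ q ∈ ({qx, qy, qz} : Multiset (Λ × Λ')), IsRelaxImage P p q.1 q.2 :=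
    fun q hq => ⟨_, h, hpC ▸ hq⟩
  have hnode := hp.2.1 _ h
  rw [hpC] at hnode
  exact ⟨qx.2, qy.2, qz.2, by simpa using hnode, himage qx (by simp), himage qy (by simp),
    himage qz (by simp)⟩

end Relaxation

/-- Labels of `P` playing the roles of the labels of the paper's `Q^{n+1}(Π)`: `b`, `c`, `a i`,
`d i` are images of `B`, `C`, `A_{i+1}`, `D_{i+1}`, while `e₀` and the `e i` are images of
`D_{n+1}`, one for each node configuration containing it (relaxations act on occurrences). -/
structure QPattern {Λ : Type} (P : NEProblem 3 Λ) (n : ℕ) where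
  b : Λ
  c : Λ
  e₀ : Λ
  a : Fin n → Λ
  d : Fin n → Λ
  e : Fin n → Λ
  node_bce : ({b, c, e₀} : Multiset Λ) ∈ P.nodeC
  node_ade : ∀ i, ({a i, d i, e i} : Multiset Λ) ∈ P.nodeC
  edge_bd_cd : ∀ x ∈ insert b (insert e₀ (Set.range e) ∪ Set.range d),
    ∀ y ∈ insert c (insert e₀ (Set.range e) ∪ Set.range d), ({x, y} : Multiset Λ) ∈ P.edgeC
  edge_ae : ∀ i, ∀ x ∈ insert e₀ (Set.range e), ({a i, x} : Multiset Λ) ∈ P.edgeC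
  edge_ad : ∀ i j, i < j → ({a i, d j} : Multiset Λ) ∈ P.edgeC

namespace QPattern

variable {Λ : Type} {P : NEProblem 3 Λ} {n : ℕ}

def eSet (π : QPattern P n) : Set Λ := insert π.e₀ (Set.range π.e)

def dSet (π : QPattern P n) : Set Λ := π.eSet ∪ Set.range π.d

lemma e_mem_dSet (π : QPattern P n) (i : Fin n) : π.e i ∈ π.dSet :=
  Or.inl (Set.mem_insert_of_mem _ ⟨i, rfl⟩)

lemma d_mem_dSet (π : QPattern P n) (i : Fin n) : π.d i ∈ π.dSet := Or.inr ⟨i, rfl⟩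

lemma edge_dSet (π : QPattern P n) {x y : Λ} (hx : x ∈ π.dSet) (hy : y ∈ π.dSet) :
    ({x, y} : Multiset Λ) ∈ P.edgeC :=
  π.edge_bd_cd x (Set.mem_insert_of_mem _ hx) y (Set.mem_insert_of_mem _ hy)

lemma relax {Λ' : Type} {P' : NEProblem 3 Λ'} (π : QPattern P n) (h : Relaxes P P') :
    Nonempty (QPattern P' n) := by
  obtain ⟨p, hp⟩ := h
  obtain ⟨b, c, e₀, hbce, hb, hc, he₀⟩ := hp.exists_node_image π.node_bce
  choose a d e hade using fun i => hp.exists_node_image (π.node_ade i)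
  have hE : ∀ x' ∈ insert e₀ (Set.range e), ∃ x ∈ π.eSet, IsRelaxImage P p x x' := by
    rintro x' (rfl | ⟨i, rfl⟩)
    · exact ⟨_, Set.mem_insert _ _, he₀⟩
    · exact ⟨_, Set.mem_insert_of_mem _ ⟨i, rfl⟩, (hade i).2.2.2⟩
  have hD : ∀ {b b'}, IsRelaxImage P p b b' →
      ∀ x' ∈ insert b' (insert e₀ (Set.range e) ∪ Set.range d),
      ∃ x ∈ insert b π.dSet, IsRelaxImage P p x x' := by
    rintro b b' hb x' (rfl | hx' | ⟨i, rfl⟩)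
    · exact ⟨b, Set.mem_insert _ _, hb⟩
    · obtain ⟨x, hx, hxx'⟩ := hE x' hx'
      exact ⟨x, Set.mem_insert_of_mem _ (Or.inl hx), hxx'⟩
    · exact ⟨_, Set.mem_insert_of_mem _ (π.d_mem_dSet i), (hade i).2.2.1⟩
  refine ⟨⟨b, c, e₀, a, d, e, hbce, fun i => (hade i).1, ?_, ?_, ?_⟩⟩
  · intro x' hx' y' hy'
    obtain ⟨x, hx, hxx'⟩ := hD hb x' hx'
    obtain ⟨y, hy, hyy'⟩ := hD hc y' hy'
    exact hp.edge_mem hxx' hyy' (π.edge_bd_cd x hx y hy)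
  · intro i x' hx'
    obtain ⟨x, hx, hxx'⟩ := hE x' hx'
    exact hp.edge_mem (hade i).2.1 hxx' (π.edge_ae i x hx)
  · intro i j hij
    exact hp.edge_mem (hade i).2.1 (hade j).2.2.1 (π.edge_ad i j hij)

lemma exists_solution_of_card_lt [Fintype Λ] (π : QPattern P n) (hn : Fintype.card Λ < n) :
    ∃ a d e : Λ, ({a, d, e} : Multiset Λ) ∈ P.nodeC ∧
      ({d, d} : Multiset Λ) ∈ P.edgeC ∧ ({d, e} : Multiset Λ) ∈ P.edgeC ∧
      ({e, e} : Multiset Λ) ∈ P.edgeC ∧ ({a, e} : Multiset Λ) ∈ P.edgeC ∧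
      ({a, d} : Multiset Λ) ∈ P.edgeC := by
  obtain ⟨i, j, hij, hd⟩ := Fintype.exists_ne_map_eq_of_card_lt π.d (by simpa using hn)
  wlog hlt : i < j generalizing i j
  · exact this j i hij.symm hd.symm (lt_of_le_of_ne (not_lt.1 hlt) hij.symm)
  refine ⟨π.a i, π.d i, π.e i, π.node_ade i, π.edge_dSet (π.d_mem_dSet i) (π.d_mem_dSet i),
    π.edge_dSet (π.d_mem_dSet i) (π.e_mem_dSet i), π.edge_dSet (π.e_mem_dSet i) (π.e_mem_dSet i),
    π.edge_ae i _ (Set.mem_insert_of_mem _ ⟨i, rfl⟩), ?_⟩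
  rw [hd]
  exact π.edge_ad i j hlt

lemma nonempty_qop_zero_of_relaxes_SSO [Finite Λ] (h : Relaxes SSO P) :
    Nonempty (QPattern (Qop P) 0) := by
  obtain ⟨p, hp⟩ := h
  obtain ⟨b₁, b₂, c₁, hbbc, hb₁, hb₂, hc₁⟩ :=
    hp.exists_node_image (x := .B) (y := .B) (z := .C) ⟨rfl, by simp, by simp⟩
  obtain ⟨b₃, c₂, c₃, hbcc, hb₃, hc₂, hc₃⟩ :=
    hp.exists_node_image (x := .B) (y := .C) (z := .C) ⟨rfl, by simp, by simp⟩
  obtain ⟨B, C, hBC, hB, hC⟩ := exists_REedge_le P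
    (X := ⟨{x | IsRelaxImage SSO p .B x}, b₁, hb₁⟩) (Y := ⟨{y | IsRelaxImage SSO p .C y}, c₁, hc₁⟩)
    (fun x hx y hy => hp.edge_mem hx hy rfl)
  have hoB := Occurs.of_pair_left hBC
  have hoC := Occurs.of_pair_right hBC
  have hBCB : ({B, C, B} : Multiset (SubS Λ)) ∈ (RE P).nodeC := by
    refine mem_RE_nodeC hoB hoC hoB (hB hb₁) (hC hc₁) (hB hb₂) ?_
    rwa [Multiset.pair_comm]
  have hBCC : ({B, C, C} : Multiset (SubS Λ)) ∈ (RE P).nodeC :=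
    mem_RE_nodeC hoB hoC hoC (hB hb₃) (hC hc₂) (hC hc₃) hbcc
  obtain ⟨B', C', E', hnode, hB', hC', hE'⟩ := exists_REbarNode_le (RE P)
    (X := ⟨{B}, Set.singleton_nonempty _⟩) (Y := ⟨{C}, Set.singleton_nonempty _⟩)
    (Z := ⟨{B, C}, Set.insert_nonempty _ _⟩) (by rintro _ rfl _ rfl _ (rfl | rfl) <;> assumption)
  have hocc : ∀ X ∈ ({B', C', E'} : Multiset _), Occurs (REbarNode (RE P)) X :=
    fun X hX => ⟨_, hnode, hX⟩
  have hBmem : ∀ X ∈ ({B', E'} : Set _), B ∈ X.1 ∧ Occurs (REbarNode (RE P)) X := by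
    rintro X (rfl | rfl)
    exacts [⟨hB' rfl, hocc _ (by simp)⟩, ⟨hE' (Or.inl rfl), hocc _ (by simp)⟩]
  have hCmem : ∀ Y ∈ ({C', E'} : Set _), C ∈ Y.1 ∧ Occurs (REbarNode (RE P)) Y := by
    rintro Y (rfl | rfl)
    exacts [⟨hC' rfl, hocc _ (by simp)⟩, ⟨hE' (Or.inr rfl), hocc _ (by simp)⟩]
  refine ⟨⟨B', C', E', Fin.elim0, Fin.elim0, Fin.elim0, hnode, fun i => i.elim0, ?_,
    fun i => i.elim0, fun i => i.elim0⟩⟩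
  simpa only [Set.range_eq_empty, Set.union_empty, insert_empty_eq] using
    forall_mem_Qop_edgeC hBmem hCmem hBC

/-- The labels of `R(P)` from which one step of `Q` builds the next pattern. `U m` and `V m` are
compatible because `a i ~ d j` for `i < m ≤ j`; the new `A_{i+1}` contains `U i` and the new
`D_{j+1}` contains `V i` for every `i < j`, which yields `A_{i+1} ~ D_{j+1}`. -/
structure Lift (π : QPattern P n) where
  B : SubS Λ
  C : SubS Λ
  U : Fin (n + 1) → SubS Λ
  V : Fin (n + 1) → SubS Λ
  edge_BC : ({B, C} : Multiset (SubS Λ)) ∈ REedge P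
  edge_UV : ∀ m, ({U m, V m} : Multiset (SubS Λ)) ∈ REedge P
  subset_B : insert π.b π.dSet ⊆ B.1
  subset_C : insert π.c π.dSet ⊆ C.1
  subset_U : ∀ m : Fin (n + 1), insert π.b (insert π.c π.dSet) ∪ π.a '' {i | (i : ℕ) < m} ⊆ (U m).1
  subset_V : ∀ m : Fin (n + 1), π.eSet ∪ π.d '' {j | (m : ℕ) ≤ j} ⊆ (V m).1

lemma edge_lift_seeds (π : QPattern P n) (m : Fin (n + 1)) :
    ∀ x ∈ insert π.b (insert π.c π.dSet) ∪ π.a '' {i | (i : ℕ) < m},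
      ∀ y ∈ π.eSet ∪ π.d '' {j | (m : ℕ) ≤ j}, ({x, y} : Multiset Λ) ∈ P.edgeC := by
  have hyD : ∀ y ∈ π.eSet ∪ π.d '' {j | (m : ℕ) ≤ j}, y ∈ π.dSet := by
    rintro y (hy | ⟨j, -, rfl⟩)
    exacts [Or.inl hy, π.d_mem_dSet j]
  rintro x ((rfl | rfl | hx) | ⟨i, hi, rfl⟩) y hy
  · exact π.edge_bd_cd _ (Set.mem_insert _ _) y (Set.mem_insert_of_mem _ (hyD y hy))
  · rw [Multiset.pair_comm]
    exact π.edge_bd_cd y (Set.mem_insert_of_mem _ (hyD y hy)) _ (Set.mem_insert _ _)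
  · exact π.edge_dSet hx (hyD y hy)
  · rcases hy with hy | ⟨j, hj, rfl⟩
    · exact π.edge_ae i y hy
    · exact π.edge_ad i j (Fin.lt_def.2 (lt_of_lt_of_le hi hj))

lemma nonempty_lift [Finite Λ] (π : QPattern P n) : Nonempty π.Lift := by
  obtain ⟨B, C, hBC, hB, hC⟩ := exists_REedge_le P
    (X := ⟨insert π.b π.dSet, Set.insert_nonempty _ _⟩)
    (Y := ⟨insert π.c π.dSet, Set.insert_nonempty _ _⟩) π.edge_bd_cd
  choose U V hUV hU hV using fun m => exists_REedge_le P
    (X := ⟨_, Set.insert_nonempty π.b _ |>.mono Set.subset_union_left⟩)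
    (Y := ⟨_, Set.insert_nonempty π.e₀ _ |>.mono Set.subset_union_left⟩) (π.edge_lift_seeds m)
  exact ⟨⟨B, C, U, V, hBC, hUV, hB, hC, hU, hV⟩⟩

end QPattern

namespace QPattern.Lift

variable {Λ : Type} {P : NEProblem 3 Λ} {n : ℕ} {π : QPattern P n} (L : π.Lift)

def bcLabels : Set (SubS Λ) := insert L.B (insert L.C (Set.range L.U))

def labels : Set (SubS Λ) := L.bcLabels ∪ Set.range L.V

lemma B_mem_labels : L.B ∈ L.labels := Or.inl (Set.mem_insert _ _)

lemma C_mem_labels : L.C ∈ L.labels := Or.inl (Set.mem_insert_of_mem _ (Set.mem_insert _ _))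

lemma U_mem_labels (m : Fin (n + 1)) : L.U m ∈ L.labels :=
  Or.inl (Set.mem_insert_of_mem _ (Set.mem_insert_of_mem _ ⟨m, rfl⟩))

lemma V_mem_labels (m : Fin (n + 1)) : L.V m ∈ L.labels := Or.inr ⟨m, rfl⟩

lemma b_mem_U (m : Fin (n + 1)) : π.b ∈ (L.U m).1 :=
  L.subset_U m (Or.inl (Set.mem_insert _ _))

lemma c_mem_U (m : Fin (n + 1)) : π.c ∈ (L.U m).1 :=
  L.subset_U m (Or.inl (Set.mem_insert_of_mem _ (Set.mem_insert _ _)))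

lemma occurs_of_mem_labels {X : SubS Λ} (hX : X ∈ L.labels) : Occurs (REedge P) X := by
  rcases hX with (rfl | rfl | ⟨m, rfl⟩) | ⟨m, rfl⟩
  exacts [.of_pair_left L.edge_BC, .of_pair_right L.edge_BC, .of_pair_left (L.edge_UV m),
    .of_pair_right (L.edge_UV m)]

lemma e₀_mem_of_mem_labels {X : SubS Λ} (hX : X ∈ L.labels) : π.e₀ ∈ X.1 := by
  have he₀ : π.e₀ ∈ π.dSet := Or.inl (Set.mem_insert _ _)
  rcases hX with (rfl | rfl | ⟨m, rfl⟩) | ⟨m, rfl⟩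
  exacts [L.subset_B (Set.mem_insert_of_mem _ he₀), L.subset_C (Set.mem_insert_of_mem _ he₀),
    L.subset_U m (Or.inl (Set.mem_insert_of_mem _ (Set.mem_insert_of_mem _ he₀))),
    L.subset_V m (Or.inl (Set.mem_insert _ _))]

lemma b_or_c_mem {X : SubS Λ} (hX : X ∈ L.bcLabels) : π.b ∈ X.1 ∨ π.c ∈ X.1 := by
  rcases hX with rfl | rfl | ⟨m, rfl⟩
  exacts [.inl (L.subset_B (Set.mem_insert _ _)), .inr (L.subset_C (Set.mem_insert _ _)),
    .inl (L.b_mem_U m)]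

lemma node_of_b_c {X Y Z : SubS Λ} (hX : X ∈ L.labels) (hY : Y ∈ L.labels) (hZ : Z ∈ L.labels)
    (hb : π.b ∈ X.1) (hc : π.c ∈ Y.1) : ({X, Y, Z} : Multiset (SubS Λ)) ∈ (RE P).nodeC :=
  mem_RE_nodeC (L.occurs_of_mem_labels hX) (L.occurs_of_mem_labels hY)
    (L.occurs_of_mem_labels hZ) hb hc (L.e₀_mem_of_mem_labels hZ) π.node_bce

lemma node_U_bc (m : Fin (n + 1)) {Y Z : SubS Λ} (hY : Y ∈ L.bcLabels) (hZ : Z ∈ L.labels) :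
    ({L.U m, Y, Z} : Multiset (SubS Λ)) ∈ (RE P).nodeC := by
  rcases L.b_or_c_mem hY with hb | hc
  · rw [show ({L.U m, Y, Z} : Multiset (SubS Λ)) = {Y, L.U m, Z} from Multiset.cons_swap _ _ _]
    exact L.node_of_b_c (Or.inl hY) (L.U_mem_labels m) hZ hb (L.c_mem_U m)
  · exact L.node_of_b_c (L.U_mem_labels m) (Or.inl hY) hZ (L.b_mem_U m) hc

lemma node_U_V_V {mx my : Fin (n + 1)} (mz : Fin (n + 1)) (hlt : my < mx) (hn : (my : ℕ) < n) :
    ({L.U mx, L.V my, L.V mz} : Multiset (SubS Λ)) ∈ (RE P).nodeC :=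
  mem_RE_nodeC (L.occurs_of_mem_labels (L.U_mem_labels mx))
    (L.occurs_of_mem_labels (L.V_mem_labels my)) (L.occurs_of_mem_labels (L.V_mem_labels mz))
    (L.subset_U mx (Or.inr ⟨⟨my, hn⟩, hlt, rfl⟩))
    (L.subset_V my (Or.inr ⟨⟨my, hn⟩, le_refl (my : ℕ), rfl⟩))
    (L.subset_V mz (Or.inl (Set.mem_insert_of_mem _ ⟨⟨my, hn⟩, rfl⟩))) (π.node_ade ⟨my, hn⟩)
lemma node_B_C_labels : ∀ X ∈ insert L.B (Set.range L.U), ∀ Y ∈ insert L.C (Set.range L.U),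
    ∀ Z ∈ L.labels, ({X, Y, Z} : Multiset (SubS Λ)) ∈ (RE P).nodeC := by
  rintro X (rfl | ⟨mx, rfl⟩) Y (rfl | ⟨my, rfl⟩) Z hZ
  · exact L.node_of_b_c L.B_mem_labels L.C_mem_labels hZ
      (L.subset_B (Set.mem_insert _ _)) (L.subset_C (Set.mem_insert _ _))
  · exact L.node_of_b_c L.B_mem_labels (L.U_mem_labels my) hZ
      (L.subset_B (Set.mem_insert _ _)) (L.c_mem_U my)
  · exact L.node_U_bc mx (Set.mem_insert_of_mem _ (Set.mem_insert _ _)) hZ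
  · exact L.node_U_bc mx (Set.mem_insert_of_mem _ (Set.mem_insert_of_mem _ ⟨my, rfl⟩)) hZ

lemma node_A_D_labels (i : Fin (n + 1)) : ∀ X ∈ L.U '' Set.Ici i,
    ∀ Y ∈ L.bcLabels ∪ L.V '' Set.Iio i, ∀ Z ∈ L.labels,
    ({X, Y, Z} : Multiset (SubS Λ)) ∈ (RE P).nodeC := by
  rintro _ ⟨mx, hmx, rfl⟩ Y (hY | ⟨my, hmy, rfl⟩) Z hZ
  · exact L.node_U_bc mx hY hZ
  · rcases hZ with hZ | ⟨mz, rfl⟩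
    · rw [Multiset.pair_comm]
      exact L.node_U_bc mx hZ (L.V_mem_labels my)
    · exact L.node_U_V_V mz (lt_of_lt_of_le hmy hmx) (lt_of_lt_of_le hmy (Fin.is_le i))

end QPattern.Lift

lemma QPattern.Lift.nonempty_qop {Λ : Type} [Finite Λ] {P : NEProblem 3 Λ} {n : ℕ}
    {π : QPattern P n} (L : π.Lift) : Nonempty (QPattern (Qop P) (n + 1)) := by
  obtain ⟨B, C, E₀, hBCE, hB, hC, hE₀⟩ := exists_REbarNode_le (RE P)
    (X := ⟨_, Set.insert_nonempty L.B _⟩) (Y := ⟨_, Set.insert_nonempty L.C _⟩)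
    (Z := ⟨L.labels, _, L.B_mem_labels⟩) L.node_B_C_labels
  choose A D E hADE hA hD hE using fun i => exists_REbarNode_le (RE P)
    (X := ⟨L.U '' Set.Ici i, _, i, Set.self_mem_Ici, rfl⟩)
    (Y := ⟨L.bcLabels ∪ L.V '' Set.Iio i, _, Or.inl (Set.mem_insert _ _)⟩)
    (Z := ⟨L.labels, _, L.B_mem_labels⟩) (L.node_A_D_labels i)
  have hocc₀ : ∀ X ∈ ({B, C, E₀} : Multiset _), Occurs (REbarNode (RE P)) X :=
    fun X hX => ⟨_, hBCE, hX⟩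
  have hocc : ∀ i, ∀ X ∈ ({A i, D i, E i} : Multiset _), Occurs (REbarNode (RE P)) X :=
    fun i X hX => ⟨_, hADE i, hX⟩
  have hE' : ∀ X ∈ insert E₀ (Set.range E), L.labels ⊆ X.1 ∧ Occurs (REbarNode (RE P)) X := by
    rintro X (rfl | ⟨i, rfl⟩)
    exacts [⟨hE₀, hocc₀ _ (by simp)⟩, ⟨hE i, hocc i _ (by simp)⟩]
  have hD' : ∀ i, L.bcLabels ⊆ (D i).1 := fun i X hX => hD i (Or.inl hX)
  have hBmem : ∀ X ∈ insert B (insert E₀ (Set.range E) ∪ Set.range D),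
      L.B ∈ X.1 ∧ Occurs (REbarNode (RE P)) X := by
    rintro X (rfl | hX | ⟨i, rfl⟩)
    exacts [⟨hB (Set.mem_insert _ _), hocc₀ _ (by simp)⟩,
      ⟨(hE' X hX).1 L.B_mem_labels, (hE' X hX).2⟩, ⟨hD' i (Set.mem_insert _ _), hocc i _ (by simp)⟩]
  have hCmem : ∀ Y ∈ insert C (insert E₀ (Set.range E) ∪ Set.range D),
      L.C ∈ Y.1 ∧ Occurs (REbarNode (RE P)) Y := by
    rintro Y (rfl | hY | ⟨i, rfl⟩)
    exacts [⟨hC (Set.mem_insert _ _), hocc₀ _ (by simp)⟩,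
      ⟨(hE' Y hY).1 L.C_mem_labels, (hE' Y hY).2⟩,
      ⟨hD' i (Set.mem_insert_of_mem _ (Set.mem_insert _ _)), hocc i _ (by simp)⟩]
  refine ⟨⟨B, C, E₀, A, D, E, hBCE, hADE, forall_mem_Qop_edgeC hBmem hCmem L.edge_BC, ?_, ?_⟩⟩
  · intro i X hX
    exact mem_Qop_edgeC (hocc i _ (by simp)) (hE' X hX).2 (hA i ⟨i, Set.self_mem_Ici, rfl⟩)
      ((hE' X hX).1 (L.V_mem_labels i)) (L.edge_UV i)
  · intro i j hij
    exact mem_Qop_edgeC (hocc i _ (by simp)) (hocc j _ (by simp))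
      (hA i ⟨i, Set.self_mem_Ici, rfl⟩) (hD j (Or.inr ⟨i, hij, rfl⟩)) (L.edge_UV i)

lemma QPattern.nonempty_qop_succ {Λ : Type} [Finite Λ] {P : NEProblem 3 Λ} {n : ℕ}
    (π : QPattern P n) : Nonempty (QPattern (Qop P) (n + 1)) :=
  let ⟨L⟩ := π.nonempty_lift
  L.nonempty_qop

/-- if `Ph` is a fixed point (`Q(Ph) →0 Ph`) and a relaxation of
the sinkless-and-sourceless orientation problem, then there are labels
`a, d, e` of `Ph` with `{a,d,e}` in the node constraint and all of
`{d,d}, {d,e}, {e,e}, {a,e}, {a,d}` in the edge constraint (whence `Ph` is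
zero-round solvable given a sinkless orientation). -/
theorem no_nontrivial_fixed_point_relaxation_of_SSO
    {Λh : Type} [Fintype Λh] (Ph : NEProblem 3 Λh)
    (hfix : Relaxes (Qop Ph) Ph) (hrel : Relaxes SSO Ph) :
    ∃ a d e : Λh, ({a, d, e} : Multiset Λh) ∈ Ph.nodeC ∧
      ({d, d} : Multiset Λh) ∈ Ph.edgeC ∧
      ({d, e} : Multiset Λh) ∈ Ph.edgeC ∧
      ({e, e} : Multiset Λh) ∈ Ph.edgeC ∧
      ({a, e} : Multiset Λh) ∈ Ph.edgeC ∧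
      ({a, d} : Multiset Λh) ∈ Ph.edgeC := by
  have hpattern : ∀ n, Nonempty (QPattern Ph n) := by
    intro n
    induction n with
    | zero =>
      obtain ⟨π⟩ := QPattern.nonempty_qop_zero_of_relaxes_SSO hrel
      exact π.relax hfix
    | succ n ih =>
      obtain ⟨π⟩ := ih
      obtain ⟨π'⟩ := π.nonempty_qop_succ
      exact π'.relax hfix
  obtain ⟨π⟩ := hpattern (Fintype.card Λh + 1)
  exact π.exists_solution_of_card_lt (Nat.lt_succ_self _)
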